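/- Goodstein's theorem for base-2 starting values that are powers of 2: more generally, every Goodstein sequence terminates, i.e. for every starting value m the Goodstein sequence eventually reaches 0. -/

import Mathlib

/-- Rewrite `n` in hereditary base-`b` notation and replace every occurrence of
the base `b` by `c`. -/
def hereditaryShift (b c : ℕ) : ℕ → ℕ
  | 0 => 0
  | (n + 1) =>
      c ^ (hereditaryShift b c (Nat.log b (n + 1))) * ((n + 1) / b ^ Nat.log b (n + 1)) +
        hereditaryShift b c ((n + 1) % b ^ Nat.log b (n + 1))
  termination_by n => n
  decreasing_by
  · exact Nat.log_lt_self b (Nat.succ_ne_zero n)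
  · calc (n + 1) % b ^ Nat.log b (n + 1) < b ^ Nat.log b (n + 1) :=
        Nat.mod_lt _ (Nat.pos_of_ne_zero (by
          intro h
          have hb : b = 0 := by
            rcases Nat.pow_eq_zero.mp h with ⟨hb, -⟩
            exact hb
          simp [hb, Nat.log_zero_left] at h))
      _ ≤ n + 1 := Nat.pow_log_le_self b (Nat.succ_ne_zero n)

/-- The Goodstein sequence starting at `m`: at step `n` the current value is
rewritten from hereditary base-`(n+2)` to hereditary base-`(n+3)` and then `1`
is subtracted. -/
def goodstein (m : ℕ) : ℕ → ℕ
  | 0 => m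
  | (n + 1) => hereditaryShift (n + 2) (n + 3) (goodstein m n) - 1

/-!
Replacing the base `b` by `ω` in hereditary base-`b` notation sends `n` to an ordinal below `ε₀`
(`hereditaryOrd b n`). This ordinal does not change when the base is bumped from `b` to `c ≥ b`,
and it is strictly monotone in `n`. Hence subtracting `1` after each base change strictly
decreases the ordinal attached to a Goodstein sequence, which can therefore not stay positive
forever.
-/

open Ordinal

noncomputable def hereditaryOrd (b : ℕ) : ℕ → Ordinal.{0}
  | 0 => 0
  | (n + 1) =>
      ω ^ hereditaryOrd b (Nat.log b (n + 1)) * ((n + 1) / b ^ Nat.log b (n + 1) : ℕ) +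
        hereditaryOrd b ((n + 1) % b ^ Nat.log b (n + 1))
  decreasing_by
  · exact Nat.log_lt_self b n.succ_ne_zero
  · exact (Nat.mod_lt _ (Nat.pos_of_ne_zero (by rcases b with _ | b <;> simp))).trans_le
      (Nat.pow_log_le_self b n.succ_ne_zero)

namespace Nat

variable {b e d r : ℕ}

theorem pow_le_pow_mul_add (hd : 0 < d) : b ^ e ≤ b ^ e * d + r :=
  (Nat.le_mul_of_pos_right _ hd).trans (Nat.le_add_right _ _)

theorem pow_mul_add_div_pow (hr : r < b ^ e) : (b ^ e * d + r) / b ^ e = d := by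
  rw [Nat.mul_add_div (Nat.zero_lt_of_lt hr), Nat.div_eq_of_lt hr, add_zero]

theorem pow_mul_add_mod_pow (hr : r < b ^ e) : (b ^ e * d + r) % b ^ e = r := by
  rw [Nat.mul_add_mod, Nat.mod_eq_of_lt hr]

theorem log_pow_mul_add (hd : 0 < d) (hdb : d < b) (hr : r < b ^ e) :
    Nat.log b (b ^ e * d + r) = e := by
  refine Nat.log_eq_of_pow_le_of_lt_pow (pow_le_pow_mul_add hd) ?_
  calc b ^ e * d + r < b ^ e * (d + 1) := by rw [mul_add_one]; omega
    _ ≤ b ^ (e + 1) := by rw [pow_succ]; exact Nat.mul_le_mul_left _ hdb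

theorem exists_eq_pow_mul_add (hb : 1 < b) {n : ℕ} (hn : n ≠ 0) :
    ∃ e d r, 0 < d ∧ d < b ∧ r < b ^ e ∧ n = b ^ e * d + r := by
  have hpow : 0 < b ^ Nat.log b n := Nat.pow_pos (Nat.zero_lt_of_lt hb)
  refine ⟨Nat.log b n, n / b ^ Nat.log b n, n % b ^ Nat.log b n,
    Nat.div_pos (Nat.pow_log_le_self b hn) hpow, Nat.div_lt_of_lt_mul ?_, Nat.mod_lt _ hpow,
    (Nat.div_add_mod n _).symm⟩
  rw [← pow_succ]
  exact Nat.lt_pow_succ_log_self hb n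

theorem pow_mul_add_induction (hb : 1 < b) {P : ℕ → Prop} (zero : P 0)
    (step : ∀ e d r, 0 < d → d < b → r < b ^ e → P e → P r → P (b ^ e * d + r)) (n : ℕ) :
    P n := by
  induction n using Nat.strong_induction_on with
  | _ n ih =>
    rcases Nat.eq_zero_or_pos n with rfl | hn
    · exact zero
    obtain ⟨e, d, r, hd, hdb, hr, rfl⟩ := exists_eq_pow_mul_add hb hn.ne'
    exact step e d r hd hdb hr (ih e ((Nat.lt_pow_self hb).trans_le (pow_le_pow_mul_add hd)))
      (ih r (hr.trans_le (pow_le_pow_mul_add hd)))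

theorem lex_of_pow_mul_add_lt {E D R : ℕ} (hd : 0 < d) (hdb : d < b) (hr : r < b ^ e)
    (hD : 0 < D) (hDb : D < b) (hR : R < b ^ E) (h : b ^ e * d + r < b ^ E * D + R) :
    e < E ∨ e = E ∧ d < D ∨ e = E ∧ d = D ∧ r < R := by
  have he : e ≤ E := by
    simpa only [log_pow_mul_add hd hdb hr, log_pow_mul_add hD hDb hR] using
      Nat.log_mono_right (b := b) h.le
  obtain he | rfl := he.lt_or_eq
  · exact .inl he
  have hdD : d ≤ D := by
    simpa only [pow_mul_add_div_pow hr, pow_mul_add_div_pow hR] using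
      Nat.div_le_div_right (c := b ^ e) h.le
  obtain hdD | rfl := hdD.lt_or_eq
  · exact .inr (.inl ⟨rfl, hdD⟩)
  · exact .inr (.inr ⟨rfl, rfl, by omega⟩)

end Nat

section hereditaryOrd

variable {b : ℕ}

theorem hereditaryOrd_pow_mul_add {e d r : ℕ} (hd : 0 < d) (hdb : d < b) (hr : r < b ^ e) :
    hereditaryOrd b (b ^ e * d + r) = ω ^ hereditaryOrd b e * d + hereditaryOrd b r := by
  obtain ⟨n, hn⟩ := Nat.exists_eq_add_one.mpr ((Nat.zero_lt_of_lt hr).trans_le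
    (Nat.pow_le_pow_mul_add (b := b) (e := e) (r := r) hd))
  rw [hn, hereditaryOrd, ← hn, Nat.log_pow_mul_add hd hdb hr, Nat.pow_mul_add_div_pow hr,
    Nat.pow_mul_add_mod_pow hr]

theorem hereditaryOrd_pow (hb : 1 < b) (e : ℕ) :
    hereditaryOrd b (b ^ e) = ω ^ hereditaryOrd b e := by
  simpa [hereditaryOrd] using
    hereditaryOrd_pow_mul_add (e := e) one_pos hb (Nat.pow_pos (Nat.zero_lt_of_lt hb))

theorem hereditaryOrd_strictMono (hb : 1 < b) : StrictMono (hereditaryOrd b) := by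
  intro m
  induction m using Nat.pow_mul_add_induction hb with
  | zero =>
    intro k hk
    obtain ⟨E, D, R, hD, hDb, hR, rfl⟩ := Nat.exists_eq_pow_mul_add hb hk.ne'
    rw [hereditaryOrd_pow_mul_add hD hDb hR, hereditaryOrd]
    exact opow_mul_add_pos omega0_ne_zero _ (by exact_mod_cast hD.ne') _
  | step e d r hd hdb hr ihe ihr =>
    intro k hk
    obtain ⟨E, D, R, hD, hDb, hR, rfl⟩ :=
      Nat.exists_eq_pow_mul_add hb (Nat.zero_lt_of_lt hk).ne'
    have hrω : hereditaryOrd b r < ω ^ hereditaryOrd b e := hereditaryOrd_pow hb e ▸ ihr hr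
    rw [hereditaryOrd_pow_mul_add hd hdb hr, hereditaryOrd_pow_mul_add hD hDb hR]
    obtain he | ⟨rfl, hdD⟩ | ⟨rfl, rfl, hrR⟩ := Nat.lex_of_pow_mul_add_lt hd hdb hr hD hDb hR hk
    · calc ω ^ hereditaryOrd b e * d + hereditaryOrd b r < ω ^ hereditaryOrd b E :=
            opow_mul_add_lt_opow (natCast_lt_omega0 d) hrω (ihe he)
        _ ≤ ω ^ hereditaryOrd b E * D :=
            Ordinal.le_mul_left _ (by exact_mod_cast hD)
        _ ≤ _ := le_self_add
    · exact (opow_mul_add_lt_opow_mul hrω (by exact_mod_cast hdD)).trans_le le_self_add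
    · exact (add_lt_add_iff_left _).mpr (ihr hrR)

end hereditaryOrd

theorem hereditaryShift_pow_mul_add {b c e d r : ℕ} (hd : 0 < d) (hdb : d < b) (hr : r < b ^ e) :
    hereditaryShift b c (b ^ e * d + r) =
      c ^ hereditaryShift b c e * d + hereditaryShift b c r := by
  obtain ⟨n, hn⟩ := Nat.exists_eq_add_one.mpr ((Nat.zero_lt_of_lt hr).trans_le
    (Nat.pow_le_pow_mul_add (b := b) (e := e) (r := r) hd))
  rw [hn, hereditaryShift, ← hn, Nat.log_pow_mul_add hd hdb hr, Nat.pow_mul_add_div_pow hr,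
    Nat.pow_mul_add_mod_pow hr]

theorem hereditaryOrd_hereditaryShift {b c : ℕ} (hb : 1 < b) (hbc : b ≤ c) (n : ℕ) :
    hereditaryOrd c (hereditaryShift b c n) = hereditaryOrd b n := by
  have hc : 1 < c := hb.trans_le hbc
  induction n using Nat.pow_mul_add_induction hb with
  | zero => rw [hereditaryShift, hereditaryOrd, hereditaryOrd]
  | step e d r hd hdb hr ihe ihr =>
    have hshift : hereditaryShift b c r < c ^ hereditaryShift b c e := by
      rw [← (hereditaryOrd_strictMono hc).lt_iff_lt, hereditaryOrd_pow hc, ihr, ihe,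
        ← hereditaryOrd_pow hb]
      exact hereditaryOrd_strictMono hb hr
    rw [hereditaryShift_pow_mul_add hd hdb hr,
      hereditaryOrd_pow_mul_add hd (hdb.trans_le hbc) hshift, hereditaryOrd_pow_mul_add hd hdb hr,
      ihe, ihr]

theorem hereditaryShift_pos {b c n : ℕ} (hb : 1 < b) (hc : 0 < c) (hn : 0 < n) :
    0 < hereditaryShift b c n := by
  obtain ⟨e, d, r, hd, hdb, hr, rfl⟩ := Nat.exists_eq_pow_mul_add hb hn.ne'
  rw [hereditaryShift_pow_mul_add hd hdb hr]
  positivity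

theorem hereditaryOrd_goodstein_succ_lt {m n : ℕ} (hm : goodstein m n ≠ 0) :
    hereditaryOrd (n + 3) (goodstein m (n + 1)) < hereditaryOrd (n + 2) (goodstein m n) := by
  have hb : 1 < n + 2 := by omega
  have hshift := hereditaryShift_pos hb (Nat.succ_pos (n + 2)) (Nat.pos_of_ne_zero hm)
  rw [← hereditaryOrd_hereditaryShift hb (Nat.le_succ _)]
  exact hereditaryOrd_strictMono (by omega) (Nat.sub_lt hshift one_pos)

theorem goodstein_terminates (m : ℕ) : ∃ n, goodstein m n = 0 := by
  by_contra! h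
  exact not_strictAnti_of_wellFoundedLT (fun n => hereditaryOrd (n + 2) (goodstein m n))
    (strictAnti_nat_of_succ_lt fun n => hereditaryOrd_goodstein_succ_lt (h n))
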